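/- For n ≥ 1 and k, r ≥ 0 with k + r ≤ n-1, the number of words w of length n-1 over the alphabet {L^u, L^m, R} with exactly k occurrences of L^m and r occurrences of L^u, such that no occurrence of L^m is immediately followed by an occurrence of R, equals C(n-k-1, r) · C(r+k, r). -/

import Mathlib

/-- The alphabet {Lᵘ, Lᵐ, R} for properly-marked {L,R}-words. -/
inductive PMLetter
  | Lu : PMLetter
  | Lm : PMLetter
  | R : PMLetter
deriving DecidableEq

/-- A word is properly marked if no occurrence of Lᵐ is immediately followed by R. -/
def ProperlyMarked (w : List PMLetter) : Prop :=
  w.Chain' (fun a b => a = PMLetter.Lm → b ≠ PMLetter.R)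

/-! Write `s`, `r`, `k` for the numbers of letters `R`, `Lᵘ`, `Lᵐ` of a word. Splitting off the
first letter, a properly marked word is either `R` followed by a properly marked word, or a
properly marked word that may follow an `Lᵐ`, i.e. one not starting with `R`; such a word is empty,
or `Lᵘ` followed by a properly marked word, or `Lᵐ` followed by another such word. By Pascal's rule
these recursions are solved by `C(r+s, s) C(r+k, k)` and `C(r+s-1, s) C(r+k, k)` respectively.
(The two factors count the `Lᵘ/R`-pattern and the `Lᵘ/Lᵐ`-pattern of the word, which together
determine it.) -/

open PMLetter

lemma PMLetter.length_eq_count_add_count_add_count (w : List PMLetter) :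
    w.length = w.count R + w.count Lu + w.count Lm := by
  induction w with
  | nil => rfl
  | cons x w ih => cases x <;> simp [ih] <;> omega

instance : Fintype PMLetter where
  elems := {Lu, Lm, R}
  complete x := by cases x <;> decide

lemma properlyMarked_cons_iff {a : PMLetter} {w : List PMLetter} :
    ProperlyMarked (a :: w) ↔ (a = Lm → w.head? ≠ some R) ∧ ProperlyMarked w := by
  show List.IsChain _ (a :: w) ↔ _ ∧ List.IsChain _ w
  cases w <;> simp [List.isChain_cons]

@[simp]
lemma properlyMarked_nil : ProperlyMarked [] := List.isChain_nil

def properWords (s r k : ℕ) : Set (List PMLetter) :=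
  {w | ProperlyMarked w ∧ w.count R = s ∧ w.count Lu = r ∧ w.count Lm = k}

def properWordsAfterLm (s r k : ℕ) : Set (List PMLetter) :=
  {w | ProperlyMarked (Lm :: w) ∧ w.count R = s ∧ w.count Lu = r ∧ w.count Lm = k}

lemma properWords_finite (s r k : ℕ) : (properWords s r k).Finite :=
  (List.finite_length_eq PMLetter (s + r + k)).subset fun w ⟨_, hs, hr, hk⟩ =>
    (PMLetter.length_eq_count_add_count_add_count w).trans (by rw [hs, hr, hk])

lemma properWordsAfterLm_subset (s r k : ℕ) : properWordsAfterLm s r k ⊆ properWords s r k :=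
  fun _ ⟨hw, hc⟩ => ⟨(properlyMarked_cons_iff.1 hw).2, hc⟩

lemma properWordsAfterLm_finite (s r k : ℕ) : (properWordsAfterLm s r k).Finite :=
  (properWords_finite s r k).subset (properWordsAfterLm_subset s r k)

lemma properWords_zero (r k : ℕ) : properWords 0 r k = properWordsAfterLm 0 r k := by
  ext (_ | ⟨_ | _ | _, w⟩) <;> simp [properWords, properWordsAfterLm, properlyMarked_cons_iff]

lemma properWords_succ (s r k : ℕ) :
    properWords (s + 1) r k = (R :: ·) '' properWords s r k ∪ properWordsAfterLm (s + 1) r k := by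
  ext (_ | ⟨_ | _ | _, w⟩) <;> simp [properWords, properWordsAfterLm, properlyMarked_cons_iff]

lemma properWordsAfterLm_zero_zero (s : ℕ) :
    properWordsAfterLm s 0 0 = if s = 0 then {[]} else ∅ := by
  ext (_ | ⟨_ | _ | _, w⟩) <;> split_ifs <;>
    simp_all [properWordsAfterLm, properlyMarked_cons_iff, eq_comm]

lemma properWordsAfterLm_zero_succ (s k : ℕ) :
    properWordsAfterLm s 0 (k + 1) = (Lm :: ·) '' properWordsAfterLm s 0 k := by
  ext (_ | ⟨_ | _ | _, w⟩) <;> simp [properWordsAfterLm, properlyMarked_cons_iff]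

lemma properWordsAfterLm_succ_zero (s r : ℕ) :
    properWordsAfterLm s (r + 1) 0 = (Lu :: ·) '' properWords s r 0 := by
  ext (_ | ⟨_ | _ | _, w⟩) <;> simp [properWords, properWordsAfterLm, properlyMarked_cons_iff]

lemma properWordsAfterLm_succ_succ (s r k : ℕ) :
    properWordsAfterLm s (r + 1) (k + 1) =
      (Lu :: ·) '' properWords s r (k + 1) ∪ (Lm :: ·) '' properWordsAfterLm s (r + 1) k := by
  ext (_ | ⟨_ | _ | _, w⟩) <;> simp [properWords, properWordsAfterLm, properlyMarked_cons_iff]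

lemma ncard_properWords_succ (s r k : ℕ) :
    (properWords (s + 1) r k).ncard =
      (properWords s r k).ncard + (properWordsAfterLm (s + 1) r k).ncard := by
  have hdisj : Disjoint ((R :: ·) '' properWords s r k) (properWordsAfterLm (s + 1) r k) := by
    rw [Set.disjoint_left]
    rintro _ ⟨w, -, rfl⟩ ⟨hw, -⟩
    simp [properlyMarked_cons_iff] at hw
  rw [properWords_succ, Set.ncard_union_eq hdisj ((properWords_finite s r k).image _)
    (properWordsAfterLm_finite _ r k), Set.ncard_image_of_injective _ List.cons_injective]

lemma ncard_properWords_of_ncard_properWordsAfterLm {r k B : ℕ}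
    (h : ∀ s, (properWordsAfterLm s r k).ncard = (r + s - 1).choose s * B) (s : ℕ) :
    (properWords s r k).ncard = (r + s).choose s * B := by
  induction s with
  | zero => rw [properWords_zero, h]; simp
  | succ s ih =>
    rw [ncard_properWords_succ, ih, h, show r + (s + 1) = r + s + 1 by omega,
      Nat.add_sub_cancel, Nat.choose_succ_succ', add_mul]

-- With truncated subtraction `(s - 1).choose s` is `1` for `s = 0` and `0` otherwise.
lemma ncard_properWordsAfterLm_zero (s k : ℕ) :
    (properWordsAfterLm s 0 k).ncard = (s - 1).choose s := by
  induction k with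
  | zero =>
    rw [properWordsAfterLm_zero_zero]
    rcases s with _ | s <;> simp
  | succ k ih =>
    rw [properWordsAfterLm_zero_succ, Set.ncard_image_of_injective _ List.cons_injective, ih]

lemma ncard_properWordsAfterLm_succ {s r : ℕ}
    (hN : ∀ k, (properWords s r k).ncard = (r + s).choose s * (r + k).choose k) (k : ℕ) :
    (properWordsAfterLm s (r + 1) k).ncard = (r + 1 + s - 1).choose s * (r + 1 + k).choose k := by
  rw [show r + 1 + s - 1 = r + s by omega]
  induction k with
  | zero =>
    rw [properWordsAfterLm_succ_zero, Set.ncard_image_of_injective _ List.cons_injective, hN]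
    simp
  | succ k ih =>
    have hdisj : Disjoint ((Lu :: ·) '' properWords s r (k + 1))
        ((Lm :: ·) '' properWordsAfterLm s (r + 1) k) :=
      Set.disjoint_image_image fun _ _ _ _ h => by simp at h
    rw [properWordsAfterLm_succ_succ, Set.ncard_union_eq hdisj
      ((properWords_finite s r _).image _) ((properWordsAfterLm_finite s _ k).image _),
      Set.ncard_image_of_injective _ List.cons_injective,
      Set.ncard_image_of_injective _ List.cons_injective, hN, ih,
      show r + 1 + (k + 1) = r + (k + 1) + 1 by omega, Nat.choose_succ_succ' (r + (k + 1)),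
      show r + (k + 1) = r + 1 + k by omega]
    ring

theorem ncard_properWords (s r k : ℕ) :
    (properWords s r k).ncard = (r + s).choose s * (r + k).choose k := by
  induction r generalizing s k with
  | zero =>
    refine ncard_properWords_of_ncard_properWordsAfterLm (fun s => ?_) s
    rw [ncard_properWordsAfterLm_zero]
    simp
  | succ r ih =>
    exact ncard_properWords_of_ncard_properWordsAfterLm
      (fun s => ncard_properWordsAfterLm_succ (ih s) k) s

theorem pm_words_count_general (n k r : ℕ) (h : k + r ≤ n - 1) :
    Set.ncard {w : List PMLetter | w.length = n - 1 ∧ ProperlyMarked w ∧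
        w.count PMLetter.Lm = k ∧ w.count PMLetter.Lu = r} =
      Nat.choose (n - k - 1) r * Nat.choose (r + k) r := by
  have hwords : {w : List PMLetter | w.length = n - 1 ∧ ProperlyMarked w ∧
      w.count Lm = k ∧ w.count Lu = r} = properWords (n - 1 - k - r) r k := by
    ext w
    rw [Set.mem_ofPred_eq, PMLetter.length_eq_count_add_count_add_count]
    constructor
    · rintro ⟨hlen, hw, hk, hr⟩
      exact ⟨hw, by omega, hr, hk⟩
    · rintro ⟨hw, hs, hr, hk⟩
      exact ⟨by omega, hw, hk, hr⟩
  rw [hwords, ncard_properWords, ← Nat.choose_symm_add, ← Nat.choose_symm_add (a := r),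
    show r + (n - 1 - k - r) = n - k - 1 by omega]

theorem pm_words_count (n k r : ℕ) (hn : 1 ≤ n) (h : k + r ≤ n - 1) :
    Set.ncard {w : List PMLetter | w.length = n - 1 ∧ ProperlyMarked w ∧
        w.count PMLetter.Lm = k ∧ w.count PMLetter.Lu = r} =
      Nat.choose (n - k - 1) r * Nat.choose (r + k) r :=
  pm_words_count_general n k r h
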